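/- Let S be a finite multiset of pairs (a,w) ∈ ℝ^d × ℝ defining halfspaces hs_{a,w} = {x : ⟨a,x⟩ ≥ w}, and let cdepth_S be defined via convex hulls of depth level sets as usual. Fix i ∈ [d] and reals x*_1,…,x*_{i−1}, and define Q(x_i) = max over x_{i+1},…,x_d ∈ ℝ of cdepth_S(x*_1,…,x*_{i−1}, x_i, x_{i+1},…,x_d). Then Q is quasi-concave: for all x'_i ≤ x_i ≤ x''_i, Q(x_i) ≥ min{Q(x'_i), Q(x''_i)}. -/
import Mathlib


open scoped Classical

/-- Number of constraints `(a, w)` in `S` satisfied by `x`, i.e. with `⟨a, x⟩ ≥ w`. -/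
noncomputable def depth {d : ℕ} (S : Multiset ((Fin d → ℝ) × ℝ)) (x : Fin d → ℝ) : ℕ :=
  (S.filter (fun p => p.2 ≤ ∑ j, p.1 j * x j)).card

/-- Convex-hull depth: the largest `k` such that `x` is in the convex hull of the
set of points of depth at least `k`. -/
noncomputable def cdepth {d : ℕ} (S : Multiset ((Fin d → ℝ) × ℝ)) (x : Fin d → ℝ) : ℕ :=
  sSup {k : ℕ | x ∈ convexHull ℝ {y | k ≤ depth S y}}

/-- `Q S i xs t` : the maximum of `cdepth S y` over points `y` whose first `i`
coordinates agree with the fixed prefix `xs` and whose `i`-th coordinate equals `t`. -/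
noncomputable def Q {d : ℕ} (S : Multiset ((Fin d → ℝ) × ℝ)) (i : Fin d) (xs : Fin d → ℝ)
    (t : ℝ) : ℕ :=
  sSup {k : ℕ | ∃ y : Fin d → ℝ, (∀ j, j < i → y j = xs j) ∧ y i = t ∧ cdepth S y = k}

lemma depth_le_card {d : ℕ} (S : Multiset ((Fin d → ℝ) × ℝ)) (x : Fin d → ℝ) :
    depth S x ≤ Multiset.card S :=
  Multiset.card_le_card (Multiset.filter_le _ _)

lemma cdepth_bdd {d : ℕ} (S : Multiset ((Fin d → ℝ) × ℝ)) (x : Fin d → ℝ) :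
    ∀ k ∈ {k : ℕ | x ∈ convexHull ℝ {y | k ≤ depth S y}}, k ≤ Multiset.card S := by
  intro k hk
  by_contra h
  push_neg at h
  have he : {y : Fin d → ℝ | k ≤ depth S y} = ∅ := by
    ext y
    simp only [Set.mem_setOf_eq, Set.mem_empty_iff_false, iff_false, not_le]
    exact lt_of_le_of_lt (depth_le_card S y) h
  simp only [Set.mem_setOf_eq, he, convexHull_empty] at hk
  exact hk

lemma le_cdepth {d : ℕ} (S : Multiset ((Fin d → ℝ) × ℝ)) (x : Fin d → ℝ) (k : ℕ)
    (h : x ∈ convexHull ℝ {y | k ≤ depth S y}) : k ≤ cdepth S x :=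
  le_csSup ⟨Multiset.card S, cdepth_bdd S x⟩ h

lemma cdepth_mem {d : ℕ} (S : Multiset ((Fin d → ℝ) × ℝ)) (x : Fin d → ℝ) :
    x ∈ convexHull ℝ {y | cdepth S x ≤ depth S y} := by
  have h0 : (0 : ℕ) ∈ {k : ℕ | x ∈ convexHull ℝ {y | k ≤ depth S y}} := by
    simp only [Set.mem_setOf_eq]
    have : {y : Fin d → ℝ | 0 ≤ depth S y} = Set.univ := by ext y; simp
    rw [this, convexHull_univ]; trivial
  exact Nat.sSup_mem ⟨0, h0⟩ ⟨_, cdepth_bdd S x⟩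

lemma cdepth_le_card {d : ℕ} (S : Multiset ((Fin d → ℝ) × ℝ)) (x : Fin d → ℝ) :
    cdepth S x ≤ Multiset.card S :=
  cdepth_bdd S x _ (cdepth_mem S x)

lemma hull_mem_of_le {d : ℕ} (S : Multiset ((Fin d → ℝ) × ℝ)) (x : Fin d → ℝ) (k : ℕ)
    (h : k ≤ cdepth S x) : x ∈ convexHull ℝ {y | k ≤ depth S y} :=
  convexHull_mono (fun y hy => le_trans h hy) (cdepth_mem S x)

lemma Q_bdd {d : ℕ} (S : Multiset ((Fin d → ℝ) × ℝ)) (i : Fin d) (xs : Fin d → ℝ) (t : ℝ) :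
    BddAbove {k : ℕ | ∃ y : Fin d → ℝ,
      (∀ j, j < i → y j = xs j) ∧ y i = t ∧ cdepth S y = k} := by
  refine ⟨Multiset.card S, ?_⟩
  rintro k ⟨y, -, -, rfl⟩
  exact cdepth_le_card S y

lemma Q_mem {d : ℕ} (S : Multiset ((Fin d → ℝ) × ℝ)) (i : Fin d) (xs : Fin d → ℝ) (t : ℝ) :
    ∃ y : Fin d → ℝ, (∀ j, j < i → y j = xs j) ∧ y i = t ∧ cdepth S y = Q S i xs t := by
  have hne : {k : ℕ | ∃ y : Fin d → ℝ,
      (∀ j, j < i → y j = xs j) ∧ y i = t ∧ cdepth S y = k}.Nonempty := by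
    refine ⟨cdepth S (fun j => if j = i then t else xs j), fun j => if j = i then t else xs j,
      ?_, by simp, rfl⟩
    intro j hj
    simp [Fin.ne_of_lt hj]
  exact Nat.sSup_mem hne (Q_bdd S i xs t)

lemma le_Q {d : ℕ} (S : Multiset ((Fin d → ℝ) × ℝ)) (i : Fin d) (xs : Fin d → ℝ) (t : ℝ)
    (y : Fin d → ℝ) (h1 : ∀ j, j < i → y j = xs j) (h2 : y i = t) :
    cdepth S y ≤ Q S i xs t :=
  le_csSup (Q_bdd S i xs t) ⟨y, h1, h2, rfl⟩

theorem stmt_1 {d : ℕ} (S : Multiset ((Fin d → ℝ) × ℝ)) (i : Fin d) (xs : Fin d → ℝ)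
    (a b c : ℝ) (hab : a ≤ b) (hbc : b ≤ c) :
    min (Q S i xs a) (Q S i xs c) ≤ Q S i xs b := by
  rcases eq_or_lt_of_le (le_trans hab hbc) with hac | hac
  · have hba : b = a := le_antisymm (hac ▸ hbc) hab
    subst hba
    exact min_le_left _ _
  set k := min (Q S i xs a) (Q S i xs c) with hk
  obtain ⟨y₁, hpre₁, hi₁, hc₁⟩ := Q_mem S i xs a
  obtain ⟨y₂, hpre₂, hi₂, hc₂⟩ := Q_mem S i xs c
  set lam := (b - a) / (c - a) with hlam
  have hca : (0:ℝ) < c - a := by linarith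
  have hl0 : 0 ≤ lam := div_nonneg (by linarith) hca.le
  have hl1 : lam ≤ 1 := by
    rw [hlam, div_le_one hca]; linarith
  set y := (1 - lam) • y₁ + lam • y₂ with hy
  have hmem₁ : y₁ ∈ convexHull ℝ {z | k ≤ depth S z} :=
    hull_mem_of_le S y₁ k (by rw [hc₁]; exact min_le_left _ _)
  have hmem₂ : y₂ ∈ convexHull ℝ {z | k ≤ depth S z} :=
    hull_mem_of_le S y₂ k (by rw [hc₂]; exact min_le_right _ _)
  have hmem : y ∈ convexHull ℝ {z | k ≤ depth S z} :=
    (convex_convexHull ℝ _) hmem₁ hmem₂ (by linarith) hl0 (by ring)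
  have hkc : k ≤ cdepth S y := le_cdepth S y k hmem
  have hprey : ∀ j, j < i → y j = xs j := by
    intro j hj
    simp only [hy, Pi.add_apply, Pi.smul_apply, smul_eq_mul, hpre₁ j hj, hpre₂ j hj]
    ring
  have hyi : y i = b := by
    simp only [hy, Pi.add_apply, Pi.smul_apply, smul_eq_mul, hi₁, hi₂, hlam]
    field_simp
    ring
  exact le_trans hkc (le_Q S i xs b y hprey hyi)
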